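/- Let (V,⟨·,·⟩) be a real inner product space of dimension n ≥ 4 and let R be an algebraic curvature tensor on V having n-nonnegative curvature operator of the second kind. Then the scalar curvature S of R is nonnegative, and Ric(v,v) ≥ S/(n(n+1)) for every unit vector v ∈ V. -/

import Mathlib

open scoped RealInnerProductSpace

variable {V : Type*} [NormedAddCommGroup V] [InnerProductSpace ℝ V]

/-- `R` is an algebraic curvature tensor: antisymmetric in the first two slots,
symmetric under exchange of the first and second pairs, and satisfying the
first Bianchi identity. -/
def IsAlgCurvatureTensor (R : V →ₗ[ℝ] V →ₗ[ℝ] V →ₗ[ℝ] V →ₗ[ℝ] ℝ) : Prop :=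
  (∀ x y z w : V, R x y z w = - R y x z w) ∧
  (∀ x y z w : V, R x y z w = R z w x y) ∧
  (∀ x y z w : V, R x y z w + R y z x w + R z x y w = 0)

/-- The Ricci curvature `Ric(x,y) = Σ_j R(x,e_j,y,e_j)` with respect to an
orthonormal basis. -/
noncomputable def ricci {n : ℕ} (b : OrthonormalBasis (Fin n) ℝ V)
    (R : V →ₗ[ℝ] V →ₗ[ℝ] V →ₗ[ℝ] V →ₗ[ℝ] ℝ) (x y : V) : ℝ :=
  ∑ j, R x (b j) y (b j)

/-- The scalar curvature `S = Σ_{i,j} R_{ijij}`. -/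
noncomputable def scalarCurv {n : ℕ} (b : OrthonormalBasis (Fin n) ℝ V)
    (R : V →ₗ[ℝ] V →ₗ[ℝ] V →ₗ[ℝ] V →ₗ[ℝ] ℝ) : ℝ :=
  ∑ i, ∑ j, R (b i) (b j) (b i) (b j)

/-- `φ` is a symmetric bilinear form which is traceless with respect to the
orthonormal basis `b`. -/
def IsTracelessSymForm {n : ℕ} (b : OrthonormalBasis (Fin n) ℝ V)
    (φ : V →ₗ[ℝ] V →ₗ[ℝ] ℝ) : Prop :=
  (∀ x y : V, φ x y = φ y x) ∧ (∑ i, φ (b i) (b i) = 0)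

/-- The inner product `⟨φ,ψ⟩ = Σ_{i,j} φ(e_i,e_j) ψ(e_i,e_j)` of bilinear forms. -/
noncomputable def formInner {n : ℕ} (b : OrthonormalBasis (Fin n) ℝ V)
    (φ ψ : V →ₗ[ℝ] V →ₗ[ℝ] ℝ) : ℝ :=
  ∑ i, ∑ j, φ (b i) (b j) * ψ (b i) (b j)

/-- The curvature operator of the second kind
`R̊(φ,ψ) = Σ_{i,j,k,l} R_{ijkl} φ(e_i,e_l) ψ(e_j,e_k)`. -/
noncomputable def secondKind {n : ℕ} (b : OrthonormalBasis (Fin n) ℝ V)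
    (R : V →ₗ[ℝ] V →ₗ[ℝ] V →ₗ[ℝ] V →ₗ[ℝ] ℝ)
    (φ ψ : V →ₗ[ℝ] V →ₗ[ℝ] ℝ) : ℝ :=
  ∑ i, ∑ j, ∑ k, ∑ l,
    R (b i) (b j) (b k) (b l) * φ (b i) (b l) * ψ (b j) (b k)

/-- `R` has `k`-nonnegative curvature operator of the second kind:
`Σ_{a=1}^k R̊(φ_a,φ_a) ≥ 0` for every orthonormal `k`-tuple of traceless
symmetric bilinear forms. -/
def kNonnegSecondKind {n : ℕ} (b : OrthonormalBasis (Fin n) ℝ V)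
    (R : V →ₗ[ℝ] V →ₗ[ℝ] V →ₗ[ℝ] V →ₗ[ℝ] ℝ) (k : ℕ) : Prop :=
  ∀ φ : Fin k → (V →ₗ[ℝ] V →ₗ[ℝ] ℝ),
    (∀ a, IsTracelessSymForm b (φ a)) →
    (∀ a a', formInner b (φ a) (φ a') = if a = a' then 1 else 0) →
    0 ≤ ∑ a, secondKind b R (φ a) (φ a)

/-- `R` has `k`-positive curvature operator of the second kind:
`Σ_{a=1}^k R̊(φ_a,φ_a) > 0` for every orthonormal `k`-tuple of traceless
symmetric bilinear forms. -/
def kPosSecondKind {n : ℕ} (b : OrthonormalBasis (Fin n) ℝ V)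
    (R : V →ₗ[ℝ] V →ₗ[ℝ] V →ₗ[ℝ] V →ₗ[ℝ] ℝ) (k : ℕ) : Prop :=
  ∀ φ : Fin k → (V →ₗ[ℝ] V →ₗ[ℝ] ℝ),
    (∀ a, IsTracelessSymForm b (φ a)) →
    (∀ a a', formInner b (φ a) (φ a') = if a = a' then 1 else 0) →
    0 < ∑ a, secondKind b R (φ a) (φ a)

/-!
Fix a unit vector `v` and an orthonormal basis `e` with `e i₀ = v` (the image of `b` under a
reflection). With `g` the inner product, the `n` traceless forms `(g - n v ⊗ v) / √(n(n-1))` and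
`(e a ⊗ v + v ⊗ e a) / √2`, `a ≠ i₀`, are orthonormal, and the sum of `R̊` over them is
`(2n Ric(v,v) - S) / (n(n-1)) + Ric(v,v)`, since `R̊(u ⊗ w, u' ⊗ w') = R(u,u',w',w)`.
So `n`-nonnegativity gives `S ≤ n(n+1) Ric(v,v)`; summing this over `b` gives
`n S ≤ n(n+1) S`, i.e. `S ≥ 0`.
-/

noncomputable def tensorForm (u w : V) : V →ₗ[ℝ] V →ₗ[ℝ] ℝ :=
  (LinearMap.mul ℝ ℝ).compl₁₂ (innerₗ V u) (innerₗ V w)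

@[simp] lemma tensorForm_apply (u w x y : V) : tensorForm u w x y = ⟪u, x⟫ * ⟪w, y⟫ := rfl

noncomputable def symTensorForm (u w : V) : V →ₗ[ℝ] V →ₗ[ℝ] ℝ :=
  tensorForm u w + tensorForm w u

-- `g - n v ⊗ v`, written with `+ (-n) •` so that `map_add`/`map_smul` expand it under
-- `formInnerₗ`/`secondKindₗ` (`map_sub` does not unify on these iterated `LinearMap` types).
noncomputable def radialForm (n : ℕ) (v : V) : V →ₗ[ℝ] V →ₗ[ℝ] ℝ :=
  innerₗ V + (-n : ℝ) • tensorForm v v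

namespace OrthonormalBasis

variable {ι : Type*} [Fintype ι] (b : OrthonormalBasis ι ℝ V)

lemma apply₄_eq_sum (R : V →ₗ[ℝ] V →ₗ[ℝ] V →ₗ[ℝ] V →ₗ[ℝ] ℝ) (x y z w : V) :
    R x y z w = ∑ i, ∑ j, ∑ k, ∑ l,
      ⟪b i, x⟫ * ⟪b j, y⟫ * ⟪b k, z⟫ * ⟪b l, w⟫ * R (b i) (b j) (b k) (b l) := by
  conv_lhs =>
    rw [← b.sum_repr' x]; simp only [map_sum, map_smul, LinearMap.sum_apply, LinearMap.smul_apply]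
    rw [← b.sum_repr' y]; simp only [map_sum, map_smul, LinearMap.sum_apply, LinearMap.smul_apply]
    rw [← b.sum_repr' z]; simp only [map_sum, map_smul, LinearMap.sum_apply, LinearMap.smul_apply]
    rw [← b.sum_repr' w]; simp only [map_sum, map_smul, smul_eq_mul, Finset.mul_sum, mul_assoc]
  simp only [mul_assoc]

lemma sum_inner_mul_apply (f : V →ₗ[ℝ] ℝ) (x : V) : ∑ i, ⟪b i, x⟫ * f (b i) = f x := by
  simp only [← smul_eq_mul, ← map_smul, ← map_sum, b.sum_repr']

lemma sum_apply_self_eq (e : OrthonormalBasis ι ℝ V) (B : V →ₗ[ℝ] V →ₗ[ℝ] ℝ) :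
    ∑ i, B (b i) (b i) = ∑ a, B (e a) (e a) :=
  calc ∑ i, B (b i) (b i) = ∑ i, ∑ a, ⟪e a, b i⟫ * B (b i) (e a) := by
        simp only [e.sum_inner_mul_apply]
    _ = ∑ a, ∑ i, ⟪b i, e a⟫ * B.flip (e a) (b i) := by
        rw [Finset.sum_comm]; simp only [real_inner_comm, LinearMap.flip_apply]
    _ = ∑ a, B (e a) (e a) :=
        Finset.sum_congr rfl fun a _ => b.sum_inner_mul_apply (B.flip (e a)) (e a)

lemma sum_tensorForm_apply_self (u w : V) : ∑ i, tensorForm u w (b i) (b i) = ⟪u, w⟫ := by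
  simp only [tensorForm_apply, ← b.sum_inner_mul_inner u w, real_inner_comm w]

lemma sum_innerₗ_apply_self : ∑ i, innerₗ V (b i) (b i) = Fintype.card ι := by
  simp

lemma innerₗ_eq_sum_tensorForm : innerₗ V = ∑ i, tensorForm (b i) (b i) := by
  ext x y
  rw [innerₗ_apply_apply, ← b.sum_inner_mul_inner x y]
  simp only [LinearMap.sum_apply, tensorForm_apply, real_inner_comm x]

end OrthonormalBasis

lemma OrthonormalBasis.exists_apply_eq {ι : Type*} [Fintype ι] (b : OrthonormalBasis ι ℝ V)
    (i₀ : ι) {v : V} (hv : ‖v‖ = 1) : ∃ e : OrthonormalBasis ι ℝ V, e i₀ = v :=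
  ⟨b.map (Submodule.reflection (ℝ ∙ (b i₀ - v))ᗮ),
    Submodule.reflection_sub (by rw [b.orthonormal.1 i₀, hv])⟩

namespace IsAlgCurvatureTensor

variable {R : V →ₗ[ℝ] V →ₗ[ℝ] V →ₗ[ℝ] V →ₗ[ℝ] ℝ}

lemma apply_swap_right (hR : IsAlgCurvatureTensor R) (x y z w : V) :
    R x y z w = -R x y w z := by
  rw [hR.2.1 x y z w, hR.1 z w x y, hR.2.1 w z x y]

lemma apply_self_left (hR : IsAlgCurvatureTensor R) (x z w : V) : R x x z w = 0 := by
  linarith [hR.1 x x z w]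

lemma apply_swap_swap (hR : IsAlgCurvatureTensor R) (x y z w : V) :
    R y x w z = R x y z w := by
  rw [hR.1, hR.apply_swap_right, neg_neg]

end IsAlgCurvatureTensor

lemma cast_mul_cast_sub_one_pos {n : ℕ} (hn : 2 ≤ n) : (0 : ℝ) < n * (n - 1) := by
  have : (2 : ℝ) ≤ n := by exact_mod_cast hn
  nlinarith

variable {n : ℕ} (b : OrthonormalBasis (Fin n) ℝ V)

noncomputable def formInnerₗ : (V →ₗ[ℝ] V →ₗ[ℝ] ℝ) →ₗ[ℝ] (V →ₗ[ℝ] V →ₗ[ℝ] ℝ) →ₗ[ℝ] ℝ :=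
  LinearMap.mk₂ ℝ (formInner b)
    (fun _ _ _ => by simp only [formInner, LinearMap.add_apply, add_mul, Finset.sum_add_distrib])
    (fun _ _ _ => by
      simp only [formInner, LinearMap.smul_apply, smul_eq_mul, Finset.mul_sum, mul_assoc])
    (fun _ _ _ => by simp only [formInner, LinearMap.add_apply, mul_add, Finset.sum_add_distrib])
    (fun _ _ _ => by
      simp only [formInner, LinearMap.smul_apply, smul_eq_mul, Finset.mul_sum, mul_left_comm])

lemma formInnerₗ_apply (φ ψ : V →ₗ[ℝ] V →ₗ[ℝ] ℝ) : formInnerₗ b φ ψ = formInner b φ ψ := rfl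

lemma formInner_comm (φ ψ : V →ₗ[ℝ] V →ₗ[ℝ] ℝ) : formInner b φ ψ = formInner b ψ φ := by
  simp only [formInner, mul_comm]

lemma formInner_tensorForm (u₁ w₁ u₂ w₂ : V) :
    formInner b (tensorForm u₁ w₁) (tensorForm u₂ w₂) = ⟪u₁, u₂⟫ * ⟪w₁, w₂⟫ := by
  rw [← b.sum_inner_mul_inner u₁ u₂, ← b.sum_inner_mul_inner w₁ w₂, Finset.sum_mul_sum]
  exact Fintype.sum_congr _ _ fun i => Fintype.sum_congr _ _ fun j => by
    simp only [tensorForm_apply, real_inner_comm u₂, real_inner_comm w₂]; ring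

lemma formInner_innerₗ_left (φ : V →ₗ[ℝ] V →ₗ[ℝ] ℝ) :
    formInner b (innerₗ V) φ = ∑ i, φ (b i) (b i) := by
  simp [formInner, orthonormal_iff_ite.mp b.orthonormal]

lemma formInner_innerₗ_tensorForm (u w : V) :
    formInner b (innerₗ V) (tensorForm u w) = ⟪u, w⟫ := by
  rw [formInner_innerₗ_left, b.sum_tensorForm_apply_self]

lemma formInner_tensorForm_innerₗ (u w : V) :
    formInner b (tensorForm u w) (innerₗ V) = ⟪u, w⟫ := by
  rw [formInner_comm, formInner_innerₗ_tensorForm]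

lemma formInner_innerₗ_innerₗ : formInner b (innerₗ V) (innerₗ V) = n := by
  rw [formInner_innerₗ_left, b.sum_innerₗ_apply_self, Fintype.card_fin]

variable {b} in
lemma IsTracelessSymForm.smul {φ : V →ₗ[ℝ] V →ₗ[ℝ] ℝ} (hφ : IsTracelessSymForm b φ) (c : ℝ) :
    IsTracelessSymForm b (c • φ) :=
  ⟨fun x y => by simp only [LinearMap.smul_apply, hφ.1 x y],
    by simp only [LinearMap.smul_apply, smul_eq_mul, ← Finset.mul_sum, hφ.2, mul_zero]⟩

lemma isTracelessSymForm_symTensorForm {u w : V} (h : ⟪u, w⟫ = 0) :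
    IsTracelessSymForm b (symTensorForm u w) :=
  ⟨fun x y => by simp only [symTensorForm, LinearMap.add_apply, tensorForm_apply]; ring,
    by simp only [symTensorForm, LinearMap.add_apply, Finset.sum_add_distrib,
      b.sum_tensorForm_apply_self, h, real_inner_comm u, add_zero]⟩

lemma isTracelessSymForm_radialForm {v : V} (hv : ⟪v, v⟫ = 1) :
    IsTracelessSymForm b (radialForm n v) :=
  ⟨fun x y => by
      simp only [radialForm, LinearMap.add_apply, LinearMap.smul_apply, innerₗ_apply_apply,
        tensorForm_apply, real_inner_comm x]; ring,
    by simp only [radialForm, LinearMap.add_apply, LinearMap.smul_apply, Finset.sum_add_distrib,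
      smul_eq_mul, ← Finset.mul_sum, b.sum_innerₗ_apply_self, b.sum_tensorForm_apply_self, hv,
      Fintype.card_fin]; ring⟩

lemma formInner_radialForm_self {v : V} (hv : ⟪v, v⟫ = 1) :
    formInner b (radialForm n v) (radialForm n v) = n * (n - 1) := by
  rw [← formInnerₗ_apply]
  simp only [radialForm, map_add, map_smul, LinearMap.add_apply, LinearMap.smul_apply]
  simp only [formInnerₗ_apply, formInner_tensorForm, formInner_innerₗ_tensorForm,
    formInner_tensorForm_innerₗ, formInner_innerₗ_innerₗ, hv]
  simp; ring

lemma formInner_radialForm_symTensorForm {u v : V} (hv : ⟪v, v⟫ = 1) (hu : ⟪u, v⟫ = 0) :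
    formInner b (radialForm n v) (symTensorForm u v) = 0 := by
  rw [← formInnerₗ_apply]
  simp only [radialForm, symTensorForm, map_add, map_smul, LinearMap.add_apply,
    LinearMap.smul_apply]
  simp only [formInnerₗ_apply, formInner_tensorForm, formInner_innerₗ_tensorForm, hv, hu,
    real_inner_comm u v]
  simp

lemma formInner_symTensorForm {u u' v : V} (hv : ⟪v, v⟫ = 1) (hu : ⟪u, v⟫ = 0)
    (hu' : ⟪u', v⟫ = 0) :
    formInner b (symTensorForm u v) (symTensorForm u' v) = 2 * ⟪u, u'⟫ := by
  rw [← formInnerₗ_apply]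
  simp only [symTensorForm, map_add, LinearMap.add_apply]
  simp only [formInnerₗ_apply, formInner_tensorForm, hu, hu', hv, real_inner_comm u' v]
  ring

variable (R : V →ₗ[ℝ] V →ₗ[ℝ] V →ₗ[ℝ] V →ₗ[ℝ] ℝ)

noncomputable def secondKindₗ : (V →ₗ[ℝ] V →ₗ[ℝ] ℝ) →ₗ[ℝ] (V →ₗ[ℝ] V →ₗ[ℝ] ℝ) →ₗ[ℝ] ℝ :=
  LinearMap.mk₂ ℝ (secondKind b R)
    (fun _ _ _ => by
      simp only [secondKind, LinearMap.add_apply, mul_add, add_mul, Finset.sum_add_distrib])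
    (fun _ _ _ => by
      simp only [secondKind, LinearMap.smul_apply, smul_eq_mul, Finset.mul_sum]
      exact Fintype.sum_congr _ _ fun _ => Fintype.sum_congr _ _ fun _ =>
        Fintype.sum_congr _ _ fun _ => Fintype.sum_congr _ _ fun _ => by ring)
    (fun _ _ _ => by
      simp only [secondKind, LinearMap.add_apply, mul_add, Finset.sum_add_distrib])
    (fun _ _ _ => by
      simp only [secondKind, LinearMap.smul_apply, smul_eq_mul, Finset.mul_sum]
      exact Fintype.sum_congr _ _ fun _ => Fintype.sum_congr _ _ fun _ =>
        Fintype.sum_congr _ _ fun _ => Fintype.sum_congr _ _ fun _ => by ring)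

lemma secondKindₗ_apply (φ ψ : V →ₗ[ℝ] V →ₗ[ℝ] ℝ) :
    secondKindₗ b R φ ψ = secondKind b R φ ψ := rfl

lemma secondKind_tensorForm (u₁ w₁ u₂ w₂ : V) :
    secondKind b R (tensorForm u₁ w₁) (tensorForm u₂ w₂) = R u₁ u₂ w₂ w₁ := by
  rw [b.apply₄_eq_sum R]
  exact Fintype.sum_congr _ _ fun i => Fintype.sum_congr _ _ fun j =>
    Fintype.sum_congr _ _ fun k => Fintype.sum_congr _ _ fun l => by
      simp only [tensorForm_apply, real_inner_comm (b _)]; ring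

lemma secondKind_innerₗ_tensorForm (u w : V) :
    secondKind b R (innerₗ V) (tensorForm u w) = ∑ i, R (b i) u w (b i) := by
  rw [b.innerₗ_eq_sum_tensorForm, ← secondKindₗ_apply, map_sum, LinearMap.sum_apply]
  simp only [secondKindₗ_apply, secondKind_tensorForm]

lemma secondKind_tensorForm_innerₗ (u w : V) :
    secondKind b R (tensorForm u w) (innerₗ V) = ∑ i, R u (b i) (b i) w := by
  rw [b.innerₗ_eq_sum_tensorForm, ← secondKindₗ_apply, map_sum]
  simp only [secondKindₗ_apply, secondKind_tensorForm]

variable {R}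

lemma secondKind_innerₗ_innerₗ (hR : IsAlgCurvatureTensor R) :
    secondKind b R (innerₗ V) (innerₗ V) = -scalarCurv b R := by
  conv_lhs => arg 4; rw [b.innerₗ_eq_sum_tensorForm]
  rw [← secondKindₗ_apply, map_sum, scalarCurv, Finset.sum_comm, ← Finset.sum_neg_distrib]
  refine Finset.sum_congr rfl fun j _ => ?_
  rw [secondKindₗ_apply, secondKind_innerₗ_tensorForm, ← Finset.sum_neg_distrib]
  exact Finset.sum_congr rfl fun i _ => hR.apply_swap_right _ _ _ _

lemma secondKind_innerₗ_tensorForm_self (hR : IsAlgCurvatureTensor R) (v : V) :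
    secondKind b R (innerₗ V) (tensorForm v v) = -ricci b R v v := by
  simp only [secondKind_innerₗ_tensorForm, ricci, hR.1 (b _) v, hR.apply_swap_right v (b _) v,
    Finset.sum_neg_distrib]

lemma secondKind_tensorForm_innerₗ_self (hR : IsAlgCurvatureTensor R) (v : V) :
    secondKind b R (tensorForm v v) (innerₗ V) = -ricci b R v v := by
  simp only [secondKind_tensorForm_innerₗ, ricci, hR.apply_swap_right v (b _) (b _),
    Finset.sum_neg_distrib]

lemma secondKind_radialForm_self (hR : IsAlgCurvatureTensor R) (v : V) :
    secondKind b R (radialForm n v) (radialForm n v) =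
      2 * n * ricci b R v v - scalarCurv b R := by
  rw [← secondKindₗ_apply]
  simp only [radialForm, map_add, map_smul, LinearMap.add_apply, LinearMap.smul_apply]
  simp only [secondKindₗ_apply, secondKind_tensorForm, secondKind_innerₗ_innerₗ b hR,
    secondKind_innerₗ_tensorForm_self b hR, secondKind_tensorForm_innerₗ_self b hR,
    hR.apply_self_left, smul_eq_mul]
  ring

lemma secondKind_symTensorForm_self (hR : IsAlgCurvatureTensor R) (u v : V) :
    secondKind b R (symTensorForm u v) (symTensorForm u v) = 2 * R v u v u := by
  rw [← secondKindₗ_apply]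
  simp only [symTensorForm, map_add, LinearMap.add_apply]
  simp only [secondKindₗ_apply, secondKind_tensorForm, hR.apply_self_left,
    hR.apply_swap_swap v u v u]
  ring

lemma sum_ricci_self : ∑ i, ricci b R (b i) (b i) = scalarCurv b R := rfl

lemma ricci_eq_ricci (e : OrthonormalBasis (Fin n) ℝ V) (x y : V) :
    ricci b R x y = ricci e R x y :=
  b.sum_apply_self_eq e ((R x).flip y)

noncomputable def ricciTestForms (e : OrthonormalBasis (Fin n) ℝ V) (i₀ a : Fin n) :
    V →ₗ[ℝ] V →ₗ[ℝ] ℝ :=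
  if a = i₀ then (√(n * (n - 1) : ℝ))⁻¹ • radialForm n (e i₀)
  else (√2)⁻¹ • symTensorForm (e a) (e i₀)

variable (e : OrthonormalBasis (Fin n) ℝ V) (i₀ : Fin n)

lemma isTracelessSymForm_ricciTestForms (a : Fin n) :
    IsTracelessSymForm b (ricciTestForms e i₀ a) := by
  unfold ricciTestForms
  split_ifs with ha
  · exact (isTracelessSymForm_radialForm b (by simp)).smul _
  · exact (isTracelessSymForm_symTensorForm b
      (by simp [orthonormal_iff_ite.mp e.orthonormal, ha])).smul _

lemma formInner_ricciTestForms (hn : 2 ≤ n) (a a' : Fin n) :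
    formInner b (ricciTestForms e i₀ a) (ricciTestForms e i₀ a') = if a = a' then 1 else 0 := by
  have he := orthonormal_iff_ite.mp e.orthonormal
  have hv : ⟪e i₀, e i₀⟫ = 1 := by simp
  have hperp {a : Fin n} (ha : a ≠ i₀) : ⟪e a, e i₀⟫ = 0 := by simp [he, ha]
  have normalize {x : ℝ} (hx : 0 < x) (y : ℝ) : (√x)⁻¹ * ((√x)⁻¹ * (x * y)) = y := by
    rw [← mul_assoc, ← mul_inv, Real.mul_self_sqrt hx.le, inv_mul_cancel_left₀ hx.ne']
  unfold ricciTestForms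
  rw [← formInnerₗ_apply]
  by_cases ha : a = i₀ <;> by_cases ha' : a' = i₀ <;>
    simp only [ha, ha', if_true, if_false, map_smul, LinearMap.smul_apply, formInnerₗ_apply,
      smul_eq_mul]
  · simpa [formInner_radialForm_self b hv] using normalize (cast_mul_cast_sub_one_pos hn) 1
  · rw [formInner_radialForm_symTensorForm b hv (hperp ha'), if_neg (Ne.symm ha'), mul_zero,
      mul_zero]
  · rw [formInner_comm, formInner_radialForm_symTensorForm b hv (hperp ha), mul_zero, mul_zero]
  · rw [formInner_symTensorForm b hv (hperp ha) (hperp ha'), he, normalize two_pos]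

lemma secondKind_ricciTestForms (hR : IsAlgCurvatureTensor R) (a : Fin n) :
    secondKind b R (ricciTestForms e i₀ a) (ricciTestForms e i₀ a) =
      (if a = i₀ then (2 * n * ricci b R (e i₀) (e i₀) - scalarCurv b R) / (n * (n - 1))
        else 0) + R (e i₀) (e a) (e i₀) (e a) := by
  have hn : (0 : ℝ) ≤ n * (n - 1) := by
    rcases n with _ | n
    · simp
    · push_cast; nlinarith
  unfold ricciTestForms
  rw [← secondKindₗ_apply]
  by_cases ha : a = i₀
  · simp only [ha, if_true, map_smul, LinearMap.smul_apply, secondKindₗ_apply, smul_eq_mul,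
      secondKind_radialForm_self b hR, hR.apply_self_left, add_zero]
    rw [← mul_assoc, ← mul_inv, Real.mul_self_sqrt hn, inv_mul_eq_div]
  · simp only [ha, if_false, map_smul, LinearMap.smul_apply, secondKindₗ_apply, smul_eq_mul,
      secondKind_symTensorForm_self b hR, zero_add]
    rw [← mul_assoc, ← mul_inv, Real.mul_self_sqrt zero_le_two, inv_mul_cancel_left₀ two_ne_zero]

lemma sum_secondKind_ricciTestForms (hR : IsAlgCurvatureTensor R) :
    ∑ a, secondKind b R (ricciTestForms e i₀ a) (ricciTestForms e i₀ a) =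
      (2 * n * ricci b R (e i₀) (e i₀) - scalarCurv b R) / (n * (n - 1)) +
        ricci b R (e i₀) (e i₀) := by
  simp only [secondKind_ricciTestForms b e i₀ hR, Finset.sum_add_distrib, Finset.sum_ite_eq',
    Finset.mem_univ, if_true, ricci_eq_ricci b e]
  rfl

lemma scalarCurv_le_mul_ricci (hn : 2 ≤ n) (hR : IsAlgCurvatureTensor R)
    (hnn : kNonnegSecondKind b R n) {v : V} (hv : ‖v‖ = 1) :
    scalarCurv b R ≤ n * (n + 1) * ricci b R v v := by
  let i₀ : Fin n := ⟨0, by omega⟩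
  obtain ⟨e, rfl⟩ := b.exists_apply_eq i₀ hv
  have key := hnn _ (isTracelessSymForm_ricciTestForms b e i₀)
    (formInner_ricciTestForms b e i₀ hn)
  rw [sum_secondKind_ricciTestForms b e i₀ hR] at key
  have hpos := cast_mul_cast_sub_one_pos hn
  have hscaled := mul_nonneg hpos.le key
  rw [mul_add, mul_div_cancel₀ _ hpos.ne'] at hscaled
  linear_combination hscaled

lemma scalarCurv_nonneg (hn : 2 ≤ n) (hR : IsAlgCurvatureTensor R)
    (hnn : kNonnegSecondKind b R n) : 0 ≤ scalarCurv b R := by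
  have hsum : ∑ i, scalarCurv b R ≤ ∑ i, n * (n + 1) * ricci b R (b i) (b i) :=
    Finset.sum_le_sum fun i _ => scalarCurv_le_mul_ricci b hn hR hnn (b.orthonormal.1 i)
  rw [← Finset.mul_sum, sum_ricci_self, Finset.sum_const, Finset.card_univ, Fintype.card_fin,
    nsmul_eq_mul] at hsum
  have hn₀ : (0 : ℝ) < n := by exact_mod_cast (by omega : 0 < n)
  exact nonneg_of_mul_nonneg_right (by linear_combination hsum) (mul_pos hn₀ hn₀)

theorem stmt_8 {n : ℕ} (hn : 4 ≤ n)
    (b : OrthonormalBasis (Fin n) ℝ V)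
    (R : V →ₗ[ℝ] V →ₗ[ℝ] V →ₗ[ℝ] V →ₗ[ℝ] ℝ)
    (hR : IsAlgCurvatureTensor R)
    (hnn : kNonnegSecondKind b R n) :
    0 ≤ scalarCurv b R ∧
      ∀ v : V, ‖v‖ = 1 →
        scalarCurv b R / ((n : ℝ) * ((n : ℝ) + 1)) ≤ ricci b R v v := by
  have hn₂ : 2 ≤ n := by omega
  refine ⟨scalarCurv_nonneg b hn₂ hR hnn, fun v hv => ?_⟩
  rw [div_le_iff₀ (by positivity), mul_comm]
  exact scalarCurv_le_mul_ricci b hn₂ hR hnn hv
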